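/- arXiv:math/0603224 — 2 statements merged into one kernel-verified Lean document; each statement's English description precedes it below -/
import Mathlib

section
/- C¹-stability of quadratic variation (deterministic version): let X : [0,T] → ℝ be continuous with finite quadratic variation [X,X] (the limit of C(ε,X,X)(t) exists uniformly in t and defines a continuous increasing function), and let f, g ∈ C¹(ℝ). Then the covariation [f(X), g(X)] exists and [f(X),g(X)]_t = ∫₀ᵗ f'(X_s) g'(X_s) d[X,X]_s. -/
/-!
Write `h = f'(X) g'(X)` and `w_ε = (X(· + ε) - X)² / ε`, so that `C(ε, X, X)(t) = ∫₀ᵗ w_ε`.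
A first-order Taylor expansion of `f` and `g`, uniform on the compact range of `X`, gives
`(f(X(s+ε)) - f(X s)) (g(X(s+ε)) - g(X s)) = h(s) (X(s+ε) - X s)² + o((X(s+ε) - X s)²)` uniformly
in `s`, hence `C(ε, f∘X, g∘X)(t) - ∫₀ᵗ h w_ε = o(C(ε, X, X)(T))`. The measures `w_ε ds` have
distribution functions `C(ε, X, X)` converging uniformly on `[0,T]` to `[X,X]`, and comparing
`∫₀ᵗ h w_ε ds` and `∫₀ᵗ h d[X,X]` with the Riemann–Stieltjes sums of `h` on one fine uniform
partition of `[0,t]` shows that they are uniformly close.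
-/

open MeasureTheory Filter Set

/-- `f` is extended constantly outside `[0,T]`. -/
def ExtConst (T : ℝ) (f : ℝ → ℝ) : Prop :=
  (∀ t ≤ (0:ℝ), f t = f 0) ∧ ∀ t, T ≤ t → f t = f T

/-- The `ε`-covariation `C(ε,U,V)(t)`. -/
noncomputable def Ccov (ε : ℝ) (U V : ℝ → ℝ) (t : ℝ) : ℝ :=
  ∫ s in (0:ℝ)..t, (U (s + ε) - U s) * (V (s + ε) - V s) / ε

open Topology

lemma ExtConst.comp_projIcc {T : ℝ} {X : ℝ → ℝ} (hXe : ExtConst T X) (hT : 0 ≤ T) (s : ℝ) :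
    X (projIcc 0 T hT s) = X s := by
  rcases le_or_gt s 0 with hs | hs
  · rw [projIcc_of_le_left hT hs, hXe.1 s hs]
  rcases le_or_gt T s with hs' | hs'
  · rw [projIcc_of_right_le hT hs', hXe.2 s hs']
  · rw [projIcc_of_mem hT ⟨hs.le, hs'.le⟩]

lemma ExtConst.uniformContinuous {T : ℝ} {X : ℝ → ℝ} (hXe : ExtConst T X) (hT : 0 ≤ T)
    (hXc : Continuous X) : UniformContinuous X := by
  have hXr : UniformContinuous fun s : Icc 0 T => X s :=
    CompactSpace.uniformContinuous_of_continuous (hXc.comp continuous_subtype_val)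
  simpa only [Function.comp_def, hXe.comp_projIcc hT] using
    hXr.comp (LipschitzWith.projIcc hT).uniformContinuous

lemma ExtConst.exists_forall_mem_Icc {T : ℝ} {X : ℝ → ℝ} (hXe : ExtConst T X) (hT : 0 ≤ T)
    (hXc : Continuous X) : ∃ c d, ∀ s, X s ∈ Icc c d := by
  have hK := (isCompact_Icc (a := 0) (b := T)).image hXc
  obtain ⟨c, hc⟩ := hK.bddBelow
  obtain ⟨d, hd⟩ := hK.bddAbove
  refine ⟨c, d, fun s => ?_⟩
  have hs : X s ∈ X '' Icc 0 T := hXe.comp_projIcc hT s ▸ mem_image_of_mem X (projIcc 0 T hT s).2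
  exact ⟨hc hs, hd hs⟩

lemma ContDiff.exists_abs_sub_sub_deriv_mul_le {f : ℝ → ℝ} (hf : ContDiff ℝ 1 f) (c d : ℝ)
    {δ : ℝ} (hδ : 0 < δ) : ∃ r > 0, ∀ a ∈ Icc c d, ∀ b ∈ Icc c d, |b - a| ≤ r →
      |f b - f a - deriv f a * (b - a)| ≤ δ * |b - a| := by
  obtain ⟨r, hr, hfr⟩ := Metric.uniformContinuousOn_iff_le.mp
    (isCompact_Icc.uniformContinuousOn_of_continuous
      (hf.continuous_deriv le_rfl).continuousOn (s := Icc c d)) δ hδ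
  refine ⟨r, hr, fun a ha b hb hab => ?_⟩
  have hderiv : ∀ u ∈ uIcc a b, HasDerivWithinAt (fun u => f u - deriv f a * u)
      (deriv f u - deriv f a) (uIcc a b) u := fun u _ =>
    (((hf.differentiable one_ne_zero) u).hasDerivAt.sub
      ((hasDerivAt_id u).const_mul _) |>.congr_deriv (by simp)).hasDerivWithinAt
  have hbound : ∀ u ∈ uIcc a b, ‖deriv f u - deriv f a‖ ≤ δ := fun u hu =>
    hfr u (uIcc_subset_Icc ha hb hu) a ha
      ((abs_sub_left_of_mem_uIcc hu).trans hab)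
  have := convex_uIcc a b |>.norm_image_sub_le_of_norm_hasDerivWithin_le hderiv hbound
    left_mem_uIcc right_mem_uIcc
  simpa only [Real.norm_eq_abs, mul_sub, sub_sub_sub_comm] using this

lemma abs_mul_sub_mul_mul_sq_le {x y p q e δ : ℝ} (hx : |x - p * e| ≤ δ * |e|)
    (hy : |y - q * e| ≤ δ * |e|) : |x * y - p * q * e ^ 2| ≤ (|p| + |q| + δ) * δ * e ^ 2 := by
  have hδ : 0 ≤ δ * |e| := (abs_nonneg _).trans hx
  calc |x * y - p * q * e ^ 2|
      = |p * e * (y - q * e) + (x - p * e) * (q * e) + (x - p * e) * (y - q * e)| := by ring_nf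
    _ ≤ |p| * |e| * (δ * |e|) + δ * |e| * (|q| * |e|) + δ * |e| * (δ * |e|) := by
      refine (abs_add_three _ _ _).trans (add_le_add_three ?_ ?_ ?_) <;>
        simp only [abs_mul] <;> gcongr
    _ = (|p| + |q| + δ) * δ * e ^ 2 := by rw [← sq_abs e]; ring

lemma ContDiff.exists_abs_mul_sub_deriv_mul_deriv_le {f g : ℝ → ℝ} (hf : ContDiff ℝ 1 f)
    (hg : ContDiff ℝ 1 g) (c d : ℝ) {δ : ℝ} (hδ : 0 < δ) :
    ∃ r > 0, ∀ a ∈ Icc c d, ∀ b ∈ Icc c d, |b - a| ≤ r →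
      |(f b - f a) * (g b - g a) - deriv f a * deriv g a * (b - a) ^ 2| ≤ δ * (b - a) ^ 2 := by
  obtain ⟨Lf, hLf⟩ := isCompact_Icc.exists_bound_of_continuousOn
    (hf.continuous_deriv le_rfl).continuousOn (s := Icc c d)
  obtain ⟨Lg, hLg⟩ := isCompact_Icc.exists_bound_of_continuousOn
    (hg.continuous_deriv le_rfl).continuousOn (s := Icc c d)
  set L := max (max Lf Lg) 0
  set δ' := min 1 (δ / (2 * L + 1))
  have hL : 0 ≤ L := le_max_right _ _
  have hδ' : 0 < δ' := lt_min one_pos (by positivity)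
  have hδ'1 : δ' ≤ 1 := min_le_left _ _
  have hδ'δ : (2 * L + 1) * δ' ≤ δ := by
    rw [← le_div_iff₀' (by positivity)]; exact min_le_right _ _
  obtain ⟨rf, hrf, hf'⟩ := hf.exists_abs_sub_sub_deriv_mul_le c d hδ'
  obtain ⟨rg, hrg, hg'⟩ := hg.exists_abs_sub_sub_deriv_mul_le c d hδ'
  refine ⟨min rf rg, lt_min hrf hrg, fun a ha b hb hab => ?_⟩
  have hfa : |deriv f a| ≤ L := (hLf a ha).trans ((le_max_left _ _).trans (le_max_left _ _))
  have hga : |deriv g a| ≤ L := (hLg a ha).trans ((le_max_right _ _).trans (le_max_left _ _))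
  calc _ ≤ (|deriv f a| + |deriv g a| + δ') * δ' * (b - a) ^ 2 :=
        abs_mul_sub_mul_mul_sq_le
          (by simpa [sub_sub] using hf' a ha b hb (hab.trans (min_le_left _ _)))
          (by simpa [sub_sub] using hg' a ha b hb (hab.trans (min_le_right _ _)))
    _ ≤ (2 * L + 1) * δ' * (b - a) ^ 2 := by gcongr; linarith
    _ ≤ δ * (b - a) ^ 2 := by gcongr

lemma eventually_abs_incr_mul_incr_sub_le {X f g : ℝ → ℝ} {c d : ℝ} (hX : UniformContinuous X)
    (hXcd : ∀ s, X s ∈ Icc c d) (hf : ContDiff ℝ 1 f) (hg : ContDiff ℝ 1 g) {δ : ℝ}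
    (hδ : 0 < δ) : ∀ᶠ ε in 𝓝 0, ∀ s,
      |(f (X (s + ε)) - f (X s)) * (g (X (s + ε)) - g (X s))
        - deriv f (X s) * deriv g (X s) * (X (s + ε) - X s) ^ 2| ≤ δ * (X (s + ε) - X s) ^ 2 := by
  obtain ⟨r, hr, hfg⟩ := hf.exists_abs_mul_sub_deriv_mul_deriv_le hg c d hδ
  obtain ⟨η, hη, hXη⟩ := Metric.uniformContinuous_iff_le.mp hX r hr
  filter_upwards [Metric.closedBall_mem_nhds 0 hη] with ε hε s
  refine hfg _ (hXcd s) _ (hXcd _) (hXη ?_)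
  simpa [Real.dist_eq] using hε

lemma Ccov_self_monotone {X : ℝ → ℝ} (hXc : Continuous X) {ε : ℝ} (hε : 0 < ε) :
    Monotone (Ccov ε X X) := fun a b hab => by
  have hint : ∀ u v : ℝ, IntervalIntegrable
      (fun s => (X (s + ε) - X s) * (X (s + ε) - X s) / ε) volume u v := fun u v =>
    Continuous.intervalIntegrable (by fun_prop) u v
  rw [← sub_nonneg, Ccov, Ccov, intervalIntegral.integral_interval_sub_left (hint 0 b) (hint 0 a)]
  exact intervalIntegral.integral_nonneg hab fun s _ => div_nonneg (mul_self_nonneg _) hε.le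

lemma abs_Ccov_sub_integral_le {U V X φ : ℝ → ℝ} (hU : Continuous U) (hV : Continuous V)
    (hX : Continuous X) (hφ : Continuous φ) {ε δ t : ℝ} (hε : 0 < ε) (ht : 0 ≤ t)
    (hUV : ∀ s, |(U (s + ε) - U s) * (V (s + ε) - V s) - φ s * (X (s + ε) - X s) ^ 2| ≤
      δ * (X (s + ε) - X s) ^ 2) :
    |Ccov ε U V t - ∫ s in (0:ℝ)..t, φ s * ((X (s + ε) - X s) * (X (s + ε) - X s) / ε)| ≤
      δ * Ccov ε X X t := by
  have hpt : ∀ s, ‖(U (s + ε) - U s) * (V (s + ε) - V s) / ε -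
      φ s * ((X (s + ε) - X s) * (X (s + ε) - X s) / ε)‖ ≤
      δ * ((X (s + ε) - X s) * (X (s + ε) - X s) / ε) := fun s =>
    calc _ = |((U (s + ε) - U s) * (V (s + ε) - V s) - φ s * (X (s + ε) - X s) ^ 2) / ε| := by
          rw [Real.norm_eq_abs]; ring_nf
      _ = |(U (s + ε) - U s) * (V (s + ε) - V s) - φ s * (X (s + ε) - X s) ^ 2| / ε := by
          rw [abs_div, abs_of_pos hε]
      _ ≤ δ * (X (s + ε) - X s) ^ 2 / ε := by gcongr; exact hUV s
      _ = _ := by ring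
  rw [Ccov, ← intervalIntegral.integral_sub (Continuous.intervalIntegrable (by fun_prop) _ _)
    (Continuous.intervalIntegrable (by fun_prop) _ _), ← Real.norm_eq_abs, Ccov,
    ← intervalIntegral.integral_const_mul]
  exact intervalIntegral.norm_integral_le_of_norm_le ht (Eventually.of_forall fun s _ => hpt s)
    (Continuous.intervalIntegrable (by fun_prop) _ _)

lemma tendstoUniformlyOn_Ccov_comp_sub_integral {X f g : ℝ → ℝ} {c d T : ℝ}
    (hX : UniformContinuous X) (hXcd : ∀ s, X s ∈ Icc c d) (hf : ContDiff ℝ 1 f)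
    (hg : ContDiff ℝ 1 g) (hXT : IsBoundedUnder (· ≤ ·) (𝓝[>] 0) fun ε => Ccov ε X X T) :
    TendstoUniformlyOn (fun ε t => Ccov ε (fun s => f (X s)) (fun s => g (X s)) t -
        ∫ s in (0:ℝ)..t, deriv f (X s) * deriv g (X s) *
          ((X (s + ε) - X s) * (X (s + ε) - X s) / ε))
      0 (𝓝[>] 0) (Icc 0 T) := by
  rw [Metric.tendstoUniformlyOn_iff]
  intro η hη
  obtain ⟨C, hC⟩ := hXT
  set δ := η / (|C| + 1)
  have hδ : 0 < δ := by positivity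
  filter_upwards [hC, self_mem_nhdsWithin,
    nhdsWithin_le_nhds (eventually_abs_incr_mul_incr_sub_le hX hXcd hf hg hδ)]
    with ε (hεC : Ccov ε X X T ≤ C) (hε : 0 < ε) hexp t ht
  have hXc := hX.continuous
  rw [Pi.zero_apply, dist_zero_left, Real.norm_eq_abs]
  calc _ ≤ δ * Ccov ε X X t := abs_Ccov_sub_integral_le (hf.continuous.comp hXc)
        (hg.continuous.comp hXc) hXc (((hf.continuous_deriv le_rfl).comp hXc).mul
          ((hg.continuous_deriv le_rfl).comp hXc)) hε ht.1 hexp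
    _ ≤ δ * |C| := by
        gcongr; exact ((Ccov_self_monotone hXc hε ht.2).trans hεC).trans (le_abs_self C)
    _ < δ * (|C| + 1) := by gcongr; linarith
    _ = η := div_mul_cancel₀ _ (by positivity)

def riemannStieltjesSum (F h : ℝ → ℝ) (a : ℕ → ℝ) (n : ℕ) : ℝ :=
  ∑ k ∈ Finset.range n, h (a k) * (F (a (k + 1)) - F (a k))

lemma riemannStieltjesSum_succ (F h : ℝ → ℝ) (a : ℕ → ℝ) (n : ℕ) :
    riemannStieltjesSum F h a (n + 1) =
      riemannStieltjesSum F h a n + h (a n) * (F (a (n + 1)) - F (a n)) :=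
  Finset.sum_range_succ _ _

lemma abs_riemannStieltjesSum_sub_le {F G h : ℝ → ℝ} {a : ℕ → ℝ} {M σ : ℝ} {n : ℕ}
    (hM : ∀ k < n, |h (a k)| ≤ M) (hσ : ∀ k ≤ n, |F (a k) - G (a k)| ≤ σ) :
    |riemannStieltjesSum F h a n - riemannStieltjesSum G h a n| ≤ n * (M * (2 * σ)) := by
  induction n with
  | zero => simp [riemannStieltjesSum]
  | succ n ih =>
    have hstep : |h (a n) * ((F (a (n + 1)) - F (a n)) - (G (a (n + 1)) - G (a n)))| ≤
        M * (2 * σ) := by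
      rw [abs_mul]
      have h1 := hσ (n + 1) le_rfl
      have h2 := hσ n n.le_succ
      gcongr
      · exact (abs_nonneg _).trans (hM n n.lt_succ_self)
      · exact hM n n.lt_succ_self
      · rw [sub_sub_sub_comm]
        linarith [abs_sub (F (a (n + 1)) - G (a (n + 1))) (F (a n) - G (a n))]
    have := ih (fun k hk => hM k (hk.trans n.lt_succ_self)) (fun k hk => hσ k (hk.trans n.le_succ))
    rw [riemannStieltjesSum_succ, riemannStieltjesSum_succ]
    calc _ = |(riemannStieltjesSum F h a n - riemannStieltjesSum G h a n) +
          h (a n) * ((F (a (n + 1)) - F (a n)) - (G (a (n + 1)) - G (a n)))| := by ring_nf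
      _ ≤ _ := abs_add_le _ _
      _ ≤ _ := add_le_add this hstep
      _ = _ := by push_cast; ring

lemma natCast_mul_div_mem_Icc {t : ℝ} (ht : 0 ≤ t) {k n : ℕ} (hk : k ≤ n) :
    (k : ℝ) * (t / n) ∈ Icc 0 t := by
  refine ⟨by positivity, ?_⟩
  rcases n.eq_zero_or_pos with rfl | hn
  · simpa using ht
  calc (k : ℝ) * (t / n) ≤ n * (t / n) := by gcongr
    _ = t := mul_div_cancel₀ t (by positivity)

section Measure

variable {μ : Measure ℝ} [IsLocallyFiniteMeasure μ] {h : ℝ → ℝ}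

lemma measureReal_Ioc_add_measureReal_Ioc {a b c : ℝ} (hab : a ≤ b) (hbc : b ≤ c) :
    μ.real (Ioc a b) + μ.real (Ioc b c) = μ.real (Ioc a c) := by
  rw [← Ioc_union_Ioc_eq_Ioc hab hbc,
    measureReal_union (Ioc_disjoint_Ioc_of_le le_rfl) measurableSet_Ioc
      measure_Ioc_lt_top.ne measure_Ioc_lt_top.ne]

lemma abs_intervalIntegral_sub_mul_measureReal_le (hh : Continuous h) {a b β : ℝ}
    (hab : a ≤ b) (hβ : ∀ x ∈ Ioc a b, |h x - h a| ≤ β) :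
    |∫ x in a..b, h x ∂μ - h a * μ.real (Ioc a b)| ≤ β * μ.real (Ioc a b) := by
  rw [intervalIntegral.integral_of_le hab, mul_comm, ← smul_eq_mul, ← setIntegral_const,
    ← integral_sub (hh.intervalIntegrable a b).1 (integrableOn_const measure_Ioc_lt_top.ne)]
  exact norm_setIntegral_le_of_norm_le_const measure_Ioc_lt_top fun x hx =>
    (Real.norm_eq_abs _).trans_le (hβ x hx)

lemma abs_intervalIntegral_sub_riemannStieltjesSum_le (hh : Continuous h) {a : ℕ → ℝ}
    (ha : Monotone a) {β : ℝ} {n : ℕ}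
    (hβ : ∀ k < n, ∀ x ∈ Ioc (a k) (a (k + 1)), |h x - h (a k)| ≤ β) :
    |∫ x in a 0..a n, h x ∂μ - riemannStieltjesSum (fun t => μ.real (Ioc (a 0) t)) h a n| ≤
      β * μ.real (Ioc (a 0) (a n)) := by
  induction n with
  | zero => simp [riemannStieltjesSum]
  | succ n ih =>
    have hn : a n ≤ a (n + 1) := ha (Nat.le_add_right n 1)
    have hstep := abs_intervalIntegral_sub_mul_measureReal_le (μ := μ) hh hn (hβ n n.lt_succ_self)
    have := ih fun k hk => hβ k (hk.trans n.lt_succ_self)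
    have hadd := measureReal_Ioc_add_measureReal_Ioc (μ := μ) (ha (Nat.zero_le n)) hn
    rw [riemannStieltjesSum_succ, ← hadd, ← intervalIntegral.integral_add_adjacent_intervals
      (hh.intervalIntegrable _ _) (hh.intervalIntegrable _ _), add_sub_cancel_left]
    calc _ = |(∫ x in a 0..a n, h x ∂μ -
            riemannStieltjesSum (fun t => μ.real (Ioc (a 0) t)) h a n) +
          (∫ x in a n..a (n + 1), h x ∂μ - h (a n) * μ.real (Ioc (a n) (a (n + 1))))| := by
          ring_nf
      _ ≤ _ := abs_add_le _ _
      _ ≤ _ := add_le_add this hstep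
      _ = _ := by ring

lemma abs_setIntegral_Ioc_sub_riemannStieltjesSum_le (hh : Continuous h) {t ρ β : ℝ} {n : ℕ}
    (ht : 0 ≤ t) (hn : 0 < n) (htn : t / n ≤ ρ)
    (hhρ : ∀ x ∈ Icc 0 t, ∀ y ∈ Icc 0 t, dist x y ≤ ρ → dist (h x) (h y) ≤ β) :
    |∫ x in Ioc 0 t, h x ∂μ -
        riemannStieltjesSum (fun s => μ.real (Ioc 0 s)) h (fun k => k * (t / n)) n| ≤
      β * μ.real (Ioc 0 t) := by
  have ha : Monotone fun k : ℕ => k * (t / n) := fun _ _ hjk =>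
    mul_le_mul_of_nonneg_right (Nat.cast_le.mpr hjk) (by positivity)
  have hβ : ∀ k < n, ∀ x ∈ Ioc (k * (t / n)) ((k + 1 : ℕ) * (t / n)),
      |h x - h (k * (t / n))| ≤ β := fun k hk x hx => by
    have hk' := natCast_mul_div_mem_Icc ht hk.le
    have hk1 := natCast_mul_div_mem_Icc ht (Nat.succ_le_of_lt hk)
    rw [← Real.dist_eq]
    refine hhρ x ⟨hk'.1.trans hx.1.le, hx.2.trans hk1.2⟩ _ hk' ?_
    rw [Real.dist_eq, abs_of_pos (sub_pos.mpr hx.1)]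
    push_cast at hx
    linarith [hx.2]
  have := abs_intervalIntegral_sub_riemannStieltjesSum_le (μ := μ) hh ha hβ
  simpa [mul_div_cancel₀ t (Nat.cast_pos.mpr hn).ne', intervalIntegral.integral_of_le ht] using this

end Measure

lemma abs_setIntegral_Ioc_sub_setIntegral_Ioc_le {μ ν : Measure ℝ} [IsLocallyFiniteMeasure μ]
    [IsLocallyFiniteMeasure ν] {h : ℝ → ℝ} (hh : Continuous h) {t ρ β M σ : ℝ} {n : ℕ}
    (ht : 0 ≤ t) (hn : 0 < n) (htn : t / n ≤ ρ)
    (hhρ : ∀ x ∈ Icc 0 t, ∀ y ∈ Icc 0 t, dist x y ≤ ρ → dist (h x) (h y) ≤ β)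
    (hM : ∀ x ∈ Icc 0 t, |h x| ≤ M)
    (hσ : ∀ x ∈ Icc 0 t, |μ.real (Ioc 0 x) - ν.real (Ioc 0 x)| ≤ σ) :
    |∫ x in Ioc 0 t, h x ∂μ - ∫ x in Ioc 0 t, h x ∂ν| ≤
      β * (μ.real (Ioc 0 t) + ν.real (Ioc 0 t)) + n * (M * (2 * σ)) := by
  have hIμ := abs_setIntegral_Ioc_sub_riemannStieltjesSum_le (μ := μ) hh ht hn htn hhρ
  have hIν := abs_setIntegral_Ioc_sub_riemannStieltjesSum_le (μ := ν) hh ht hn htn hhρ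
  have hS := abs_riemannStieltjesSum_sub_le (h := h) (a := fun k => k * (t / n))
    (F := fun s => μ.real (Ioc 0 s)) (G := fun s => ν.real (Ioc 0 s)) (n := n)
    (fun k hk => hM _ (natCast_mul_div_mem_Icc ht hk.le))
    (fun k hk => hσ _ (natCast_mul_div_mem_Icc ht hk))
  set Iμ := ∫ x in Ioc 0 t, h x ∂μ
  set Iν := ∫ x in Ioc 0 t, h x ∂ν
  set Sμ := riemannStieltjesSum (fun s => μ.real (Ioc 0 s)) h (fun k => k * (t / n)) n
  set Sν := riemannStieltjesSum (fun s => ν.real (Ioc 0 s)) h (fun k => k * (t / n)) n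
  linarith [abs_sub_le Iμ Sμ Iν, abs_sub_le Sμ Sν Iν, abs_sub_comm Sν Iν]

theorem tendstoUniformlyOn_setIntegral_Ioc_of_measureReal {ι : Type*} {l : Filter ι}
    {μ : ι → Measure ℝ} [∀ i, IsLocallyFiniteMeasure (μ i)] {ν : Measure ℝ}
    [IsLocallyFiniteMeasure ν] {T : ℝ} {h : ℝ → ℝ} (hh : Continuous h)
    (hμν : TendstoUniformlyOn (fun i t => (μ i).real (Ioc 0 t)) (fun t => ν.real (Ioc 0 t)) l
      (Icc 0 T)) :
    TendstoUniformlyOn (fun i t => ∫ x in Ioc 0 t, h x ∂μ i) (fun t => ∫ x in Ioc 0 t, h x ∂ν) l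
      (Icc 0 T) := by
  rw [Metric.tendstoUniformlyOn_iff] at hμν ⊢
  intro η hη
  obtain ⟨M, hM⟩ := isCompact_Icc.exists_bound_of_continuousOn hh.continuousOn
    (s := Icc (0 : ℝ) T)
  set N := ν.real (Ioc 0 T)
  set β := η / (3 * (2 * N + 1))
  have hβ : 0 < β := by positivity
  have hβN : β * (2 * N + 1) = η / 3 := by
    have : 0 < 2 * N + 1 := by positivity
    simp only [β]; field_simp
  obtain ⟨ρ, hρ, hhρ⟩ := Metric.uniformContinuousOn_iff_le.mp
    (isCompact_Icc.uniformContinuousOn_of_continuous hh.continuousOn (s := Icc (0 : ℝ) T)) β hβ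
  obtain ⟨n, hn⟩ := exists_nat_gt (T / ρ)
  set σ := min 1 (η / (3 * (n * (|M| * 2) + 1)))
  have hσ : 0 < σ := lt_min one_pos (by positivity)
  have hnσ : n * (|M| * (2 * σ)) ≤ η / 3 := by
    have : σ ≤ η / (3 * (n * (|M| * 2) + 1)) := min_le_right _ _
    rw [le_div_iff₀ (by positivity)] at this
    nlinarith
  filter_upwards [hμν σ hσ] with i hi t ht
  have hn0 : 0 < n := Nat.cast_pos.mp ((div_nonneg (ht.1.trans ht.2) hρ.le).trans_lt hn)
  have htn : t / n ≤ ρ := by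
    rw [div_le_iff₀ (Nat.cast_pos.mpr hn0)]; rw [div_lt_iff₀ hρ] at hn; nlinarith [ht.2]
  have htT : Icc 0 t ⊆ Icc 0 T := Icc_subset_Icc_right ht.2
  have hνt : ν.real (Ioc 0 t) ≤ N :=
    measureReal_mono (Ioc_subset_Ioc_right ht.2) measure_Ioc_lt_top.ne
  have hμt : (μ i).real (Ioc 0 t) ≤ N + 1 := by
    have := hi t ht
    rw [Real.dist_eq, abs_lt] at this
    linarith [min_le_left 1 (η / (3 * (n * (|M| * 2) + 1)))]
  have key := abs_setIntegral_Ioc_sub_setIntegral_Ioc_le hh ht.1 hn0 htn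
    (fun x hx y hy => hhρ x (htT hx) y (htT hy))
    (fun x hx => (Real.norm_eq_abs _).symm.trans_le ((hM x (htT hx)).trans (le_abs_self M)))
    (fun x hx => by rw [abs_sub_comm, ← Real.dist_eq]; exact (hi x (htT hx)).le)
  rw [dist_comm, Real.dist_eq]
  calc _ ≤ β * ((μ i).real (Ioc 0 t) + ν.real (Ioc 0 t)) + n * (|M| * (2 * σ)) := key
    _ ≤ β * (2 * N + 1) + η / 3 := add_le_add (mul_le_mul_of_nonneg_left (by linarith) hβ.le) hnσ
    _ < η := by linarith

lemma setIntegral_Ioc_withDensity_toNNReal {w : ℝ → ℝ} (hw : Measurable w) (hw0 : ∀ x, 0 ≤ w x)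
    (h : ℝ → ℝ) {a b : ℝ} (hab : a ≤ b) :
    ∫ x in Ioc a b, h x ∂volume.withDensity (fun x => (w x).toNNReal) = ∫ x in a..b, h x * w x := by
  rw [setIntegral_withDensity_eq_setIntegral_smul hw.real_toNNReal _ measurableSet_Ioc,
    intervalIntegral.integral_of_le hab]
  simp_rw [NNReal.smul_def, Real.coe_toNNReal _ (hw0 _), smul_eq_mul, mul_comm]

lemma StieltjesFunction.measureReal_Ioc (F : StieltjesFunction ℝ) {a b : ℝ} (hab : a ≤ b) :
    F.measure.real (Ioc a b) = F b - F a := by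
  rw [measureReal_def, F.measure_Ioc, ENNReal.toReal_ofReal (sub_nonneg.mpr (F.mono hab))]

theorem tendstoUniformlyOn_integral_mul_Ccov {X : ℝ → ℝ} (hXc : Continuous X)
    {Q : StieltjesFunction ℝ} (hQ0 : Q 0 = 0) {T : ℝ}
    (hQV : TendstoUniformlyOn (fun ε t => Ccov ε X X t) Q (𝓝[>] 0) (Icc 0 T)) {h : ℝ → ℝ}
    (hh : Continuous h) :
    TendstoUniformlyOn
      (fun ε t => ∫ s in (0:ℝ)..t, h s * ((X (s + ε) - X s) * (X (s + ε) - X s) / ε))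
      (fun t => ∫ s in Ioc 0 t, h s ∂Q.measure) (𝓝[>] 0) (Icc 0 T) := by
  set w : ℝ → ℝ → ℝ := fun ε s => (X (s + ε) - X s) * (X (s + ε) - X s) / ε
  set μ : ℝ → Measure ℝ := fun ε => volume.withDensity fun s => (w ε s).toNNReal
  have : ∀ ε, IsLocallyFiniteMeasure (μ ε) := fun ε =>
    IsLocallyFiniteMeasure.withDensity_coe (by fun_prop)
  have hμ : ∀ᶠ ε in 𝓝[>] 0, ∀ t ∈ Icc 0 T, ∀ g : ℝ → ℝ,
      ∫ s in Ioc 0 t, g s ∂μ ε = ∫ s in (0:ℝ)..t, g s * w ε s := by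
    filter_upwards [self_mem_nhdsWithin] with ε (hε : 0 < ε) t ht g
    exact setIntegral_Ioc_withDensity_toNNReal (by fun_prop)
      (fun s => div_nonneg (mul_self_nonneg _) hε.le) g ht.1
  have hμQ : TendstoUniformlyOn (fun ε t => (μ ε).real (Ioc 0 t))
      (fun t => Q.measure.real (Ioc 0 t)) (𝓝[>] 0) (Icc 0 T) := by
    refine (hQV.congr (hμ.mono fun ε hε t ht => ?_)).congr_right fun t ht => ?_
    · simpa [Ccov, w] using (hε t ht 1).symm
    · rw [Q.measureReal_Ioc ht.1, hQ0, sub_zero]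
  exact (tendstoUniformlyOn_setIntegral_Ioc_of_measureReal hh hμQ).congr
    (hμ.mono fun ε hε t ht => hε t ht h)

theorem stmt17_general (T : ℝ) (hT : 0 < T) (X : ℝ → ℝ)
    (hXc : Continuous X) (hXe : ExtConst T X)
    (Q : StieltjesFunction ℝ) (hQ0 : Q 0 = 0)
    (hQV : TendstoUniformlyOn (fun ε t => Ccov ε X X t) Q
      (nhdsWithin 0 (Set.Ioi 0)) (Set.Icc 0 T))
    (f g : ℝ → ℝ) (hf : ContDiff ℝ 1 f) (hg : ContDiff ℝ 1 g) :
    TendstoUniformlyOn (fun ε t => Ccov ε (fun s => f (X s)) (fun s => g (X s)) t)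
      (fun t => ∫ s in Set.Ioc (0:ℝ) t, deriv f (X s) * deriv g (X s) ∂Q.measure)
      (nhdsWithin 0 (Set.Ioi 0)) (Set.Icc 0 T) := by
  obtain ⟨c, d, hXcd⟩ := hXe.exists_forall_mem_Icc hT.le hXc
  have hXT : IsBoundedUnder (· ≤ ·) (𝓝[>] 0) fun ε => Ccov ε X X T :=
    (hQV.tendsto_at ⟨hT.le, le_rfl⟩).isBoundedUnder_le
  have hh : Continuous fun s => deriv f (X s) * deriv g (X s) :=
    ((hf.continuous_deriv le_rfl).comp hXc).mul ((hg.continuous_deriv le_rfl).comp hXc)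
  have := (tendstoUniformlyOn_Ccov_comp_sub_integral (hXe.uniformContinuous hT.le hXc) hXcd hf hg
    hXT).add (tendstoUniformlyOn_integral_mul_Ccov hXc hQ0 hQV hh)
  simpa only [zero_add, Pi.add_def, sub_add_cancel] using this

/-- C¹-stability of quadratic variation: if `X` is continuous with
finite quadratic variation `[X,X]` (a continuous increasing function, realized as the
Stieltjes function `Q`) and `f, g ∈ C¹(ℝ)`, then `[f(X), g(X)]` exists and equals
`∫₀ᵗ f'(X_s) g'(X_s) d[X,X]_s`. -/
theorem stmt17 (T : ℝ) (hT : 0 < T) (X : ℝ → ℝ)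
    (hXc : Continuous X) (hXe : ExtConst T X)
    (Q : StieltjesFunction ℝ) (hQc : Continuous Q) (hQ0 : Q 0 = 0)
    (hQV : TendstoUniformlyOn (fun ε t => Ccov ε X X t) Q
      (nhdsWithin 0 (Set.Ioi 0)) (Set.Icc 0 T))
    (f g : ℝ → ℝ) (hf : ContDiff ℝ 1 f) (hg : ContDiff ℝ 1 g) :
    TendstoUniformlyOn (fun ε t => Ccov ε (fun s => f (X s)) (fun s => g (X s)) t)
      (fun t => ∫ s in Set.Ioc (0:ℝ) t, deriv f (X s) * deriv g (X s) ∂Q.measure)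
      (nhdsWithin 0 (Set.Ioi 0)) (Set.Icc 0 T) :=
  stmt17_general T hT X hXc hXe Q hQ0 hQV f g hf hg
end

section
/- For a continuous function X : [0,T] → ℝ, the quadratic variation [X,X] exists (uniformly in t) if and only if the forward integral ∫₀^· X d⁻X exists (uniformly in t); in that case [X,X]_t = X(t)² − X(0)² − 2∫₀ᵗ X d⁻X. -/
/-!
Expanding the square, `(X(s+ε) - X(s))² = (X(s+ε)² - X(s)²) - 2 X(s) (X(s+ε) - X(s))`, so the
`ε`-covariation plus twice the `ε`-forward integral equals `ε⁻¹ ∫₀ᵗ (X(s+ε)² - X(s)²) ds`, which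
telescopes to `ε⁻¹ ∫ₜ^{t+ε} X² - ε⁻¹ ∫₀^ε X²`. Substituting `s = t + εu` writes these averages as
`∫₀¹ X(t+εu)² du`, a jointly continuous function of `(ε, t)`, so by Heine–Cantor they converge to
`X(t)² - X(0)²` uniformly on compacts. Hence one of the two families converges uniformly iff the
other one does, and the limits are related by the stated formula.
-/

open MeasureTheory Filter Set

/-- The `ε`-forward integral `I⁻(ε,Y,dX)(t)`. -/
noncomputable def Iminus (ε : ℝ) (Y X : ℝ → ℝ) (t : ℝ) : ℝ :=
  ∫ s in (0:ℝ)..t, Y s * (X (s + ε) - X s) / ε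

open Topology

section Averages

variable {E : Type*} [NormedAddCommGroup E] [NormedSpace ℝ E] {f : ℝ → E}

theorem intervalIntegral.integral_sub_comp_add_right (hf : Continuous f) (a b ε : ℝ) :
    ∫ s in a..b, (f (s + ε) - f s) = (∫ s in b..b + ε, f s) - ∫ s in a..a + ε, f s := by
  have hshift : IntervalIntegrable (fun s => f (s + ε)) volume a b :=
    (hf.comp (continuous_add_const ε)).intervalIntegrable a b
  rw [intervalIntegral.integral_sub hshift (hf.intervalIntegrable a b),
    intervalIntegral.integral_comp_add_right,
    intervalIntegral.integral_interval_sub_interval_comm' (hf.intervalIntegrable _ _)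
      (hf.intervalIntegrable _ _) (hf.intervalIntegrable _ _)]

theorem tendstoUniformlyOn_integral_comp_add_mul [CompleteSpace E] (hf : Continuous f)
    {K : Set ℝ} (hK : IsCompact K) :
    TendstoUniformlyOn (fun ε t => ∫ u in (0:ℝ)..1, f (t + ε * u)) f (𝓝 0) K := by
  set φ : ℝ → ℝ → E := fun ε t => ∫ u in (0:ℝ)..1, f (t + ε * u)
  have hφ : Continuous ↿φ :=
    intervalIntegral.continuous_parametric_intervalIntegral_of_continuous' (by fun_prop) 0 1
  have hφ0 : φ 0 = f := by
    funext t
    simp [φ]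
  have hU : Icc (-1 : ℝ) 1 ∈ 𝓝 0 := Icc_mem_nhds (by norm_num) (by norm_num)
  have h := ((isCompact_Icc.prod hK).uniformContinuousOn_of_continuous
    hφ.continuousOn).tendstoUniformlyOn (mem_of_mem_nhds hU)
  rwa [nhdsWithin_eq_nhds.2 hU, hφ0] at h

theorem tendstoUniformlyOn_inv_smul_integral [CompleteSpace E] (hf : Continuous f)
    {K : Set ℝ} (hK : IsCompact K) :
    TendstoUniformlyOn (fun ε t => ε⁻¹ • ∫ s in t..t + ε, f s) f (𝓝[≠] 0) K := by
  have h : TendstoUniformlyOn (fun ε t => ∫ u in (0:ℝ)..1, f (t + ε * u)) f (𝓝[≠] 0) K :=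
    fun u hu => (tendstoUniformlyOn_integral_comp_add_mul hf hK u hu).filter_mono
      nhdsWithin_le_nhds
  refine h.congr ?_
  filter_upwards [self_mem_nhdsWithin] with ε hε t _
  simp [intervalIntegral.integral_comp_add_mul f hε]

end Averages

theorem ccov_self_add_two_mul_iminus {X : ℝ → ℝ} (hX : Continuous X) (ε t : ℝ) :
    Ccov ε X X t + 2 * Iminus ε X X t =
      ε⁻¹ * (∫ s in t..t + ε, X s ^ 2) - ε⁻¹ * ∫ s in (0:ℝ)..ε, X s ^ 2 := by
  have hdiff : IntervalIntegrable (fun s => ε⁻¹ * (X (s + ε) ^ 2 - X s ^ 2)) volume 0 t := by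
    apply Continuous.intervalIntegrable; fun_prop
  have hforward : IntervalIntegrable (fun s => 2 * (X s * (X (s + ε) - X s) / ε)) volume 0 t := by
    apply Continuous.intervalIntegrable; fun_prop
  have hsplit : Ccov ε X X t = ∫ s in (0:ℝ)..t,
      (ε⁻¹ * (X (s + ε) ^ 2 - X s ^ 2) - 2 * (X s * (X (s + ε) - X s) / ε)) :=
    intervalIntegral.integral_congr fun s _ => by ring
  rw [hsplit, intervalIntegral.integral_sub hdiff hforward, intervalIntegral.integral_const_mul,
    intervalIntegral.integral_const_mul,
    intervalIntegral.integral_sub_comp_add_right (f := fun s => X s ^ 2) (by fun_prop), zero_add,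
    Iminus]
  ring

theorem tendstoUniformlyOn_ccov_self_add_two_mul_iminus {X : ℝ → ℝ} (hX : Continuous X)
    {K : Set ℝ} (hK : IsCompact K) :
    TendstoUniformlyOn (fun ε t => Ccov ε X X t + 2 * Iminus ε X X t)
      (fun t => X t ^ 2 - X 0 ^ 2) (𝓝[≠] 0) K := by
  have hsq : Continuous fun s => X s ^ 2 := hX.pow 2
  have hat0 := (tendstoUniformlyOn_inv_smul_integral hsq isCompact_singleton).tendsto_at
    (mem_singleton 0)
  have h := (tendstoUniformlyOn_inv_smul_integral hsq hK).sub
    (hat0.tendstoUniformlyOn_const K)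
  simp only [smul_eq_mul, zero_add] at h
  exact h.congr (Eventually.of_forall fun ε t _ => (ccov_self_add_two_mul_iminus hX ε t).symm)

theorem stmt19_general (T : ℝ) (X : ℝ → ℝ)
    (hXc : Continuous X) :
    ((∃ Q : ℝ → ℝ, TendstoUniformlyOn (fun ε t => Ccov ε X X t) Q
        (nhdsWithin 0 (Set.Ioi 0)) (Set.Icc 0 T)) ↔
      (∃ F : ℝ → ℝ, TendstoUniformlyOn (fun ε t => Iminus ε X X t) F
        (nhdsWithin 0 (Set.Ioi 0)) (Set.Icc 0 T))) ∧
    (∀ Q F : ℝ → ℝ,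
      TendstoUniformlyOn (fun ε t => Ccov ε X X t) Q
        (nhdsWithin 0 (Set.Ioi 0)) (Set.Icc 0 T) →
      TendstoUniformlyOn (fun ε t => Iminus ε X X t) F
        (nhdsWithin 0 (Set.Ioi 0)) (Set.Icc 0 T) →
      ∀ t ∈ Set.Icc (0:ℝ) T, Q t = X t ^ 2 - X 0 ^ 2 - 2 * F t) := by
  have hsum : TendstoUniformlyOn (fun ε t => Ccov ε X X t + 2 * Iminus ε X X t)
      (fun t => X t ^ 2 - X 0 ^ 2) (𝓝[>] 0) (Icc 0 T) := fun u hu =>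
    (tendstoUniformlyOn_ccov_self_add_two_mul_iminus hXc isCompact_Icc u hu).filter_mono
      (nhdsWithin_mono _ fun ε (hε : 0 < ε) => hε.ne')
  have hccov : ∀ F, TendstoUniformlyOn (fun ε t => Iminus ε X X t) F (𝓝[>] 0) (Icc 0 T) →
      TendstoUniformlyOn (fun ε t => Ccov ε X X t) (fun t => X t ^ 2 - X 0 ^ 2 - 2 * F t)
        (𝓝[>] 0) (Icc 0 T) := fun F hF =>
    (hsum.sub (Real.uniformContinuous_const_mul.comp_tendstoUniformlyOn hF)).congr <|
      Eventually.of_forall fun ε t _ => by simp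
  have himinus : ∀ Q, TendstoUniformlyOn (fun ε t => Ccov ε X X t) Q (𝓝[>] 0) (Icc 0 T) →
      TendstoUniformlyOn (fun ε t => Iminus ε X X t) (fun t => 2⁻¹ * (X t ^ 2 - X 0 ^ 2 - Q t))
        (𝓝[>] 0) (Icc 0 T) := fun Q hQ =>
    (Real.uniformContinuous_const_mul.comp_tendstoUniformlyOn (hsum.sub hQ)).congr <|
      Eventually.of_forall fun ε t _ => by simp
  refine ⟨⟨fun ⟨Q, hQ⟩ => ⟨_, himinus Q hQ⟩, fun ⟨F, hF⟩ => ⟨_, hccov F hF⟩⟩,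
    fun Q F hQ hF t ht => ?_⟩
  exact tendsto_nhds_unique (hQ.tendsto_at ht) ((hccov F hF).tendsto_at ht)

/-- for continuous `X`, the quadratic variation `[X,X]` exists
(uniformly on `[0,T]`) iff the forward integral `∫₀^· X d⁻X` exists (uniformly),
and in that case `[X,X]_t = X(t)² − X(0)² − 2 ∫₀ᵗ X d⁻X`. -/
theorem stmt19 (T : ℝ) (hT : 0 < T) (X : ℝ → ℝ)
    (hXc : Continuous X) (hXe : ExtConst T X) :
    ((∃ Q : ℝ → ℝ, TendstoUniformlyOn (fun ε t => Ccov ε X X t) Q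
        (nhdsWithin 0 (Set.Ioi 0)) (Set.Icc 0 T)) ↔
      (∃ F : ℝ → ℝ, TendstoUniformlyOn (fun ε t => Iminus ε X X t) F
        (nhdsWithin 0 (Set.Ioi 0)) (Set.Icc 0 T))) ∧
    (∀ Q F : ℝ → ℝ,
      TendstoUniformlyOn (fun ε t => Ccov ε X X t) Q
        (nhdsWithin 0 (Set.Ioi 0)) (Set.Icc 0 T) →
      TendstoUniformlyOn (fun ε t => Iminus ε X X t) F
        (nhdsWithin 0 (Set.Ioi 0)) (Set.Icc 0 T) →
      ∀ t ∈ Set.Icc (0:ℝ) T, Q t = X t ^ 2 - X 0 ^ 2 - 2 * F t) :=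
  stmt19_general T X hXc
end
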